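/- arXiv:alg-geom/9510014 — 3 statements merged into one kernel-verified Lean document; each statement's English description precedes it below -/
import Mathlib

section
/- Let Λ ⊂ ℝ^k be a full-dimensional closed convex cone with Λ ∩ (−Λ) = {0}, and let s approach a boundary point of Λ from within the interior Λ°. Then X_Λ(s) → ∞. -/
/-!
Let `y₀ ≠ 0` be a supporting functional of `Λ` at `b`, i.e. `y₀ ∈ Λ*` and `⟨b, y₀⟩ = 0`.
Salience of `Λ` makes `Λ*` full-dimensional, so `Λ*` contains a ball `U` and, being a convex
cone, all its translates `U + n t y₀` (`n ∈ ℕ`), which are pairwise disjoint for `t` large.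
The integrand `e^{-⟨b, y⟩}` is invariant under these translations, so
`∫_{Λ*} e^{-⟨b, y⟩} dy = ∞`, and Fatou's lemma gives `X_Λ(s) → ∞` as `s → b`.
For `s ∈ Λ°` one has `⟨s, y⟩ ≥ c ‖y‖₁` on `Λ*`, so the Bochner integral `X_Λ(s)` is the
finite Lebesgue integral rather than the junk value `0`.
-/

open MeasureTheory Filter

/-- The dual cone of a cone `Λ ⊆ ℝ^k` (with respect to the standard pairing). -/
def dualCone {k : ℕ} (Λ : Set (Fin k → ℝ)) : Set (Fin k → ℝ) :=
  {y | ∀ x ∈ Λ, 0 ≤ ∑ i, x i * y i}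

/-- The (real) X-function of a cone: `X_Λ(s) = ∫_{Λ*} e^{-⟨s,y⟩} dy`. -/
noncomputable def XFunR {k : ℕ} (Λ : Set (Fin k → ℝ)) (s : Fin k → ℝ) : ℝ :=
  ∫ y in dualCone Λ, Real.exp (-∑ i, s i * y i)

open Set Function Topology Matrix Real
open scoped ENNReal

theorem lintegral_le_liminf_lintegral_of_tendsto {α ι : Type*} [MeasurableSpace α]
    {μ : Measure α} {l : Filter ι} [l.IsCountablyGenerated] [l.NeBot] {f : ι → α → ℝ≥0∞}
    {g : α → ℝ≥0∞} (hf : ∀ i, Measurable (f i)) (hfg : ∀ a, Tendsto (fun i => f i a) l (𝓝 (g a))) :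
    ∫⁻ a, g a ∂μ ≤ liminf (fun i => ∫⁻ a, f i a ∂μ) l :=
  calc ∫⁻ a, g a ∂μ = ∫⁻ a, liminf (fun i => f i a) l ∂μ :=
        lintegral_congr fun a => (hfg a).liminf_eq.symm
    _ ≤ liminf (fun i => ∫⁻ a, f i a ∂μ) l := lintegral_liminf_le hf

section Periodic

variable {G : Type*} [AddGroup G] [MeasurableSpace G] [MeasurableAdd G] {μ : Measure G}
  [μ.IsAddRightInvariant] {f : G → ℝ≥0∞} {v : G}

theorem setLIntegral_preimage_sub_of_periodic (hf : Periodic f v) (U : Set G) :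
    ∫⁻ y in (· - v) ⁻¹' U, f y ∂μ = ∫⁻ y in U, f y ∂μ := by
  calc ∫⁻ y in (· - v) ⁻¹' U, f y ∂μ = ∫⁻ y in (· - v) ⁻¹' U, f (y - v) ∂μ := by
        simp only [hf.sub_eq]
    _ = ∫⁻ y in U, f y ∂μ := (measurePreserving_sub_right μ v).setLIntegral_comp_preimage_emb
        (measurableEmbedding_subRight v) f U

theorem setLIntegral_eq_top_of_periodic (hf : Periodic f v) {U T : Set G}
    (hU : MeasurableSet U) (hfU : ∫⁻ y in U, f y ∂μ ≠ 0)
    (hdisj : Pairwise (Disjoint on fun n : ℕ => (· - n • v) ⁻¹' U))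
    (hT : ∀ n : ℕ, (· - n • v) ⁻¹' U ⊆ T) :
    ∫⁻ y in T, f y ∂μ = ∞ := by
  refine top_le_iff.1 ?_
  calc ∞ = ∑' _ : ℕ, ∫⁻ y in U, f y ∂μ := (ENNReal.tsum_const_eq_top_of_ne_zero hfU).symm
    _ = ∑' n : ℕ, ∫⁻ y in (· - n • v) ⁻¹' U, f y ∂μ := by
        simp_rw [setLIntegral_preimage_sub_of_periodic (hf.nsmul _)]
    _ = ∫⁻ y in ⋃ n : ℕ, (· - n • v) ⁻¹' U, f y ∂μ :=
        (lintegral_iUnion (fun n => (measurableEmbedding_subRight _).measurable hU) hdisj f).symm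
    _ ≤ ∫⁻ y in T, f y ∂μ := lintegral_mono_set (iUnion_subset hT)

end Periodic

theorem pairwise_disjoint_preimage_sub_nsmul_ball {E : Type*} [SeminormedAddCommGroup E]
    [NormedSpace ℝ E] (x w : E) {ε : ℝ} (hw : 2 * ε ≤ ‖w‖) :
    Pairwise (Disjoint on fun n : ℕ => (· - n • w) ⁻¹' Metric.ball x ε) := by
  intro m n hmn
  refine Set.disjoint_left.2 fun y hm hn => ?_
  simp only [mem_preimage, Metric.mem_ball, dist_eq_norm] at hm hn
  have hmn' : (1 : ℝ) ≤ |(n : ℝ) - m| := by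
    have : (1 : ℤ) ≤ |(n : ℤ) - m| := Int.one_le_abs (sub_ne_zero.2 (by exact_mod_cast hmn.symm))
    exact_mod_cast this
  have : ‖w‖ ≤ ‖(y - m • w - x) - (y - n • w - x)‖ := by
    rw [sub_sub_sub_cancel_right, sub_sub_sub_cancel_left, ← Nat.cast_smul_eq_nsmul ℝ,
      ← Nat.cast_smul_eq_nsmul ℝ, ← sub_smul, norm_smul, Real.norm_eq_abs]
    exact le_mul_of_one_le_left (norm_nonneg w) hmn'
  linarith [norm_sub_le (y - m • w - x) (y - n • w - x)]

theorem ContinuousLinearMap.le_zero_of_forall_le_of_smul_mem {E : Type*} [AddCommGroup E]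
    [Module ℝ E] [TopologicalSpace E] {C : Set E} (hC : ∀ c : ℝ, 0 < c → ∀ x ∈ C, c • x ∈ C)
    (f : E →L[ℝ] ℝ) {M : ℝ} (hM : ∀ x ∈ C, f x ≤ M) {x : E} (hx : x ∈ C) : f x ≤ 0 := by
  by_contra! hfx
  have := hM _ (hC ((|M| + 1) / f x) (by positivity) x hx)
  rw [map_smul, smul_eq_mul, div_mul_cancel₀ _ hfx.ne'] at this
  linarith [le_abs_self M]

theorem exists_dotProduct_eq {ι R : Type*} [Fintype ι] [DecidableEq ι] [CommSemiring R]
    (f : Module.Dual R (ι → R)) : ∃ w, ∀ x, f x = x ⬝ᵥ w := by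
  obtain ⟨w, rfl⟩ := (dotProductEquiv R ι).surjective f
  exact ⟨w, fun x => by rw [dotProductEquiv_apply_apply, dotProduct_comm]⟩

section DualCone

variable {k : ℕ} {Λ : Set (Fin k → ℝ)}

theorem isClosed_dualCone (Λ : Set (Fin k → ℝ)) : IsClosed (dualCone Λ) := by
  simp only [dualCone, ofPred_forall]
  exact isClosed_biInter fun x _ => isClosed_le continuous_const (by fun_prop)

theorem convex_dualCone (Λ : Set (Fin k → ℝ)) : Convex ℝ (dualCone Λ) := by
  intro y hy z hz a c ha hc _ x hx
  change 0 ≤ x ⬝ᵥ (a • y + c • z)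
  rw [dotProduct_add, dotProduct_smul, dotProduct_smul]
  exact add_nonneg (smul_nonneg ha (hy x hx)) (smul_nonneg hc (hz x hx))

theorem add_smul_mem_dualCone {y z : Fin k → ℝ} {t : ℝ} (hy : y ∈ dualCone Λ)
    (hz : z ∈ dualCone Λ) (ht : 0 ≤ t) : y + t • z ∈ dualCone Λ := by
  intro x hx
  change 0 ≤ x ⬝ᵥ (y + t • z)
  rw [dotProduct_add, dotProduct_smul]
  exact add_nonneg (hy x hx) (smul_nonneg ht (hz x hx))

theorem mem_of_mem_dualCone_dualCone (hcl : IsClosed Λ) (hconv : Convex ℝ Λ)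
    (hcone : ∀ c : ℝ, 0 < c → ∀ x ∈ Λ, c • x ∈ Λ) (h0 : 0 ∈ Λ) {v : Fin k → ℝ}
    (hv : v ∈ dualCone (dualCone Λ)) : v ∈ Λ := by
  by_contra hvΛ
  obtain ⟨f, u, hfΛ, hfv⟩ := geometric_hahn_banach_closed_point hconv hcl hvΛ
  obtain ⟨w, hw⟩ := exists_dotProduct_eq (f : (Fin k → ℝ) →ₗ[ℝ] ℝ)
  simp only [ContinuousLinearMap.coe_coe] at hw
  have hneg : -w ∈ dualCone Λ := fun x hx => by
    change 0 ≤ x ⬝ᵥ -w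
    rw [dotProduct_neg, ← hw, neg_nonneg]
    exact f.le_zero_of_forall_le_of_smul_mem hcone (fun x hx => (hfΛ x hx).le) hx
  have hvw : 0 ≤ -w ⬝ᵥ v := hv _ hneg
  rw [neg_dotProduct, dotProduct_comm, ← hw] at hvw
  linarith [hfΛ 0 h0, map_zero f]

theorem exists_mem_dualCone_dotProduct_eq_zero (hcl : IsClosed Λ) (hconv : Convex ℝ Λ)
    (hcone : ∀ c : ℝ, 0 < c → ∀ x ∈ Λ, c • x ∈ Λ) (h0 : 0 ∈ Λ) (hfull : (interior Λ).Nonempty)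
    {b : Fin k → ℝ} (hb : b ∈ frontier Λ) :
    ∃ y₀ ∈ dualCone Λ, y₀ ≠ 0 ∧ b ⬝ᵥ y₀ = 0 := by
  obtain ⟨f, hf⟩ := geometric_hahn_banach_open_point hconv.interior isOpen_interior hb.2
  have hclosure : closure (interior Λ) = Λ := by
    rw [hconv.closure_interior_eq_closure_of_nonempty_interior hfull, hcl.closure_eq]
  have hle : ∀ x ∈ Λ, f x ≤ f b := fun x hx =>
    closure_minimal (fun a ha => (hf a ha).le) (isClosed_le f.continuous continuous_const)
      (hclosure.symm ▸ hx)
  have hf_nonpos : ∀ x ∈ Λ, f x ≤ 0 := fun x => f.le_zero_of_forall_le_of_smul_mem hcone hle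
  have hfb : f b = 0 :=
    le_antisymm (hf_nonpos b (hcl.frontier_subset hb)) (by simpa using hle 0 h0)
  obtain ⟨w, hw⟩ := exists_dotProduct_eq (f : (Fin k → ℝ) →ₗ[ℝ] ℝ)
  simp only [ContinuousLinearMap.coe_coe] at hw
  obtain ⟨a, ha⟩ := hfull
  refine ⟨-w, fun x hx => ?_, neg_ne_zero.2 ?_, ?_⟩
  · change 0 ≤ x ⬝ᵥ -w
    rw [dotProduct_neg, ← hw, neg_nonneg]
    exact hf_nonpos x hx
  · rintro rfl
    simpa [hw, hfb] using hf a ha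
  · rw [dotProduct_neg, ← hw, hfb, neg_zero]

theorem interior_dualCone_nonempty (hcl : IsClosed Λ) (hconv : Convex ℝ Λ)
    (hcone : ∀ c : ℝ, 0 < c → ∀ x ∈ Λ, c • x ∈ Λ) (h0 : 0 ∈ Λ) (hsal : Λ ∩ -Λ = {0}) :
    (interior (dualCone Λ)).Nonempty := by
  by_contra hempty
  have hspan : Submodule.span ℝ (dualCone Λ) < ⊤ := by
    refine lt_top_iff_ne_top.2 fun htop => hempty ?_
    have h0' : (0 : Fin k → ℝ) ∈ dualCone Λ := fun x _ => by simp
    rw [(convex_dualCone Λ).interior_nonempty_iff_affineSpan_eq_top, ← insert_eq_of_mem h0',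
      ← AffineSubspace.coe_eq_univ_iff, affineSpan_insert_zero, htop, Submodule.top_coe]
  obtain ⟨g, hg, hker⟩ := (Submodule.span ℝ (dualCone Λ)).exists_le_ker_of_lt_top hspan
  obtain ⟨w, hw⟩ := exists_dotProduct_eq g
  have hperp : ∀ y ∈ dualCone Λ, y ⬝ᵥ w = 0 := fun y hy =>
    (hw y).symm.trans (hker (Submodule.subset_span hy))
  have hwΛ : w ∈ Λ := mem_of_mem_dualCone_dualCone hcl hconv hcone h0 fun y hy =>
    (hperp y hy).ge
  have hnegwΛ : -w ∈ Λ := mem_of_mem_dualCone_dualCone hcl hconv hcone h0 fun y hy => by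
    change 0 ≤ y ⬝ᵥ -w
    rw [dotProduct_neg, hperp y hy, neg_zero]
  have hw0 : w ∈ Λ ∩ -Λ := ⟨hwΛ, Set.mem_neg.2 hnegwΛ⟩
  rw [hsal, mem_singleton_iff] at hw0
  exact hg (LinearMap.ext fun x => by rw [hw, hw0, dotProduct_zero, LinearMap.zero_apply])

theorem exists_pos_mul_sum_abs_le_dotProduct {s : Fin k → ℝ} (hs : s ∈ interior Λ) :
    ∃ c > 0, ∀ y ∈ dualCone Λ, c * ∑ i, |y i| ≤ s ⬝ᵥ y := by
  obtain ⟨ε, hε, hball⟩ := Metric.mem_nhds_iff.1 (mem_interior_iff_mem_nhds.1 hs)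
  refine ⟨ε / 2, half_pos hε, fun y hy => ?_⟩
  set v : Fin k → ℝ := fun i => ε / 2 * SignType.sign (y i)
  have hv : s - v ∈ Λ := by
    refine hball ?_
    rw [Metric.mem_ball, dist_eq_norm, sub_sub_cancel_left, norm_neg, pi_norm_lt_iff hε]
    intro i
    change ‖ε / 2 * (SignType.sign (y i) : ℝ)‖ < ε
    cases SignType.sign (y i) <;> simp [abs_of_pos hε] <;> linarith
  have hvy : v ⬝ᵥ y = ε / 2 * ∑ i, |y i| := by
    simp [v, dotProduct, Finset.mul_sum, mul_assoc]
  have := hy _ hv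
  change 0 ≤ (s - v) ⬝ᵥ y at this
  rw [sub_dotProduct, hvy] at this
  linarith

theorem integrable_exp_neg_mul_abs {c : ℝ} (hc : 0 < c) :
    Integrable fun t : ℝ => exp (-c * |t|) := by
  refine .of_integral_ne_zero ?_
  rw [integral_comp_abs (f := fun t => exp (-c * t)), integral_exp_mul_Ioi (neg_neg_of_pos hc)]
  simp [hc.ne']

theorem integrableOn_exp_neg_dotProduct_dualCone {s : Fin k → ℝ} (hs : s ∈ interior Λ) :
    IntegrableOn (fun y => exp (-(s ⬝ᵥ y))) (dualCone Λ) := by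
  obtain ⟨c, hc, hdecay⟩ := exists_pos_mul_sum_abs_le_dotProduct hs
  have hprod : Integrable fun y : Fin k → ℝ => ∏ i, exp (-c * |y i|) :=
    Integrable.fintype_prod (f := fun _ t => exp (-c * |t|)) fun _ => integrable_exp_neg_mul_abs hc
  refine hprod.integrableOn.mono' (by fun_prop : Continuous _).aestronglyMeasurable
    (ae_restrict_of_forall_mem (isClosed_dualCone Λ).measurableSet fun y hy => ?_)
  rw [Real.norm_of_nonneg (exp_pos _).le, ← exp_sum, exp_le_exp, ← Finset.mul_sum]
  linarith [hdecay y hy]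

theorem ofReal_XFunR {s : Fin k → ℝ} (hs : s ∈ interior Λ) :
    ENNReal.ofReal (XFunR Λ s) = ∫⁻ y in dualCone Λ, ENNReal.ofReal (exp (-(s ⬝ᵥ y))) :=
  ofReal_integral_eq_lintegral_ofReal (integrableOn_exp_neg_dotProduct_dualCone hs)
    (ae_of_all _ fun _ => (exp_pos _).le)

theorem lintegral_exp_neg_dotProduct_dualCone_eq_top {b y₀ : Fin k → ℝ} (hy₀ : y₀ ∈ dualCone Λ)
    (hy₀ne : y₀ ≠ 0) (hby₀ : b ⬝ᵥ y₀ = 0) (hint : (interior (dualCone Λ)).Nonempty) :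
    ∫⁻ y in dualCone Λ, ENNReal.ofReal (exp (-(b ⬝ᵥ y))) = ∞ := by
  obtain ⟨u, hu⟩ := hint
  obtain ⟨ε, hε, hball⟩ := Metric.mem_nhds_iff.1 (mem_interior_iff_mem_nhds.1 hu)
  set t := 2 * ε / ‖y₀‖
  have ht : 0 ≤ t := by positivity
  have hw : ‖t • y₀‖ = 2 * ε := by
    rw [norm_smul, Real.norm_of_nonneg ht, div_mul_cancel₀ _ (norm_ne_zero_iff.2 hy₀ne)]
  have hperiodic : Periodic (fun y => ENNReal.ofReal (exp (-(b ⬝ᵥ y)))) (t • y₀) := fun y => by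
    simp only [dotProduct_add, dotProduct_smul, hby₀, smul_zero, add_zero]
  refine setLIntegral_eq_top_of_periodic hperiodic Metric.isOpen_ball.measurableSet ?_
    (pairwise_disjoint_preimage_sub_nsmul_ball u (t • y₀) hw.ge) fun n y hy => ?_
  · rw [← pos_iff_ne_zero, setLIntegral_pos_iff (by fun_prop)]
    simpa [support, exp_pos] using Metric.measure_ball_pos volume u hε
  · have hyn : y = (y - n • t • y₀) + ((n : ℝ) * t) • y₀ := by
      rw [mul_smul, Nat.cast_smul_eq_nsmul, sub_add_cancel]
    rw [hyn]
    exact add_smul_mem_dualCone (hball hy) hy₀ (by positivity)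

end DualCone

/-- as `s` tends (within the interior of `Λ`) to a boundary point
of `Λ`, `X_Λ(s) → ∞`. -/
theorem XFunction_tendsto_atTop_on_boundary (k : ℕ) (Λ : Set (Fin k → ℝ))
    (hcl : IsClosed Λ) (hconv : Convex ℝ Λ)
    (hcone : ∀ c : ℝ, 0 < c → ∀ x ∈ Λ, c • x ∈ Λ)
    (hsal : Λ ∩ (-Λ) = {0}) (hfull : (interior Λ).Nonempty)
    (b : Fin k → ℝ) (hb : b ∈ frontier Λ) :
    Tendsto (XFunR Λ) (nhdsWithin b (interior Λ)) atTop := by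
  have h0 : (0 : Fin k → ℝ) ∈ Λ := (hsal.ge (mem_singleton 0)).1
  obtain ⟨y₀, hy₀, hy₀ne, hby₀⟩ :=
    exists_mem_dualCone_dotProduct_eq_zero hcl hconv hcone h0 hfull hb
  have htop := lintegral_exp_neg_dotProduct_dualCone_eq_top hy₀ hy₀ne hby₀
    (interior_dualCone_nonempty hcl hconv hcone h0 hsal)
  have : (𝓝[interior Λ] b).NeBot := mem_closure_iff_nhdsWithin_neBot.1 <| by
    rw [hconv.closure_interior_eq_closure_of_nonempty_interior hfull]
    exact frontier_subset_closure hb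
  have hliminf : ∞ ≤ liminf (fun s => ∫⁻ y in dualCone Λ, ENNReal.ofReal (exp (-(s ⬝ᵥ y))))
      (𝓝[interior Λ] b) :=
    htop ▸ lintegral_le_liminf_lintegral_of_tendsto (fun s => by fun_prop) fun y =>
      ENNReal.tendsto_ofReal <| ((by fun_prop : Continuous fun s : Fin k → ℝ =>
        exp (-(s ⬝ᵥ y))).tendsto b).mono_left nhdsWithin_le_nhds
  rw [← ENNReal.tendsto_ofReal_nhds_top]
  refine (tendsto_of_le_liminf_of_limsup_le hliminf le_top).congr' ?_
  filter_upwards [self_mem_nhdsWithin] with s hs using (ofReal_XFunR hs).symm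
end

section
/- Let Σ be a complete fan of cones in a d-dimensional real vector space N_ℝ with dual space M_ℝ, with each maximal cone σ ∈ Σ(d) simplicial with primitive generators {e_j}. Then for s with all coordinates s_j having positive real part and any m ∈ M_ℝ, ∫_{N_ℝ} e^{-φ_s(x) - i⟨x,m⟩} dx = Σ_{σ ∈ Σ(d)} ∏_{e_j ∈ σ} (s_j + i⟨e_j, m⟩)^{-1}, where φ_s is the Σ-piecewise linear function with φ_s(e_j) = s_j, provided each maximal cone is generated by a basis of the lattice. -/
/-!
Each maximal cone is the image of the positive orthant under the linear map `t ↦ ∑ t_j e_j`,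
which preserves Lebesgue measure because the `e_j` form a lattice basis. On the orthant
`φ_s(x) + i⟨x, m⟩` becomes `∑ (s_j + i⟨e_j, m⟩) t_j`, so the integrand is a product of
one-variable exponentials and Fubini gives `∏ (s_j + i⟨e_j, m⟩)⁻¹`. Completeness and the
null overlaps of the cones turn the integral over `N_ℝ` into the sum of these cone integrals.
-/

open MeasureTheory

/-- The closed cone spanned by the (real images of the) integral generators
`gen a 0, …, gen a (d-1)` of the maximal cone indexed by `a`. -/
def maxCone {d N : ℕ} (gen : Fin N → Fin d → (Fin d → ℤ)) (a : Fin N) :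
    Set (Fin d → ℝ) :=
  {x | ∃ t : Fin d → ℝ, (∀ j, 0 ≤ t j) ∧ x = ∑ j, t j • fun i => ((gen a j i : ℝ))}

open Matrix Set

lemma volume_restrict_Ici_pi {ι : Type*} [Fintype ι] (a : ι → ℝ) :
    volume.restrict (Ici a) = Measure.pi fun i => volume.restrict (Ici (a i)) := by
  rw [volume_pi, ← pi_univ_Ici, Measure.restrict_pi_pi]

lemma integrableOn_Ici_zero_cexp_neg_mul {c : ℂ} (hc : 0 < c.re) :
    IntegrableOn (fun t : ℝ => Complex.exp (-c * t)) (Ici 0) := by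
  rw [integrableOn_Ici_iff_integrableOn_Ioi]
  exact integrableOn_exp_mul_complex_Ioi (by simpa using hc) 0

lemma integral_Ici_zero_cexp_neg_mul {c : ℂ} (hc : 0 < c.re) :
    ∫ t : ℝ in Ici 0, Complex.exp (-c * t) = c⁻¹ := by
  rw [integral_Ici_eq_integral_Ioi, integral_exp_mul_complex_Ioi (by simpa using hc)]
  simp

lemma integrableOn_Ici_zero_prod_cexp_neg_mul {ι : Type*} [Fintype ι] {c : ι → ℂ}
    (hc : ∀ j, 0 < (c j).re) :
    IntegrableOn (fun t : ι → ℝ => ∏ j, Complex.exp (-c j * t j)) (Ici 0) := by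
  rw [IntegrableOn, volume_restrict_Ici_pi]
  exact Integrable.fintype_prod fun j => integrableOn_Ici_zero_cexp_neg_mul (hc j)

lemma integral_Ici_zero_prod_cexp_neg_mul {ι : Type*} [Fintype ι] {c : ι → ℂ}
    (hc : ∀ j, 0 < (c j).re) :
    ∫ t : ι → ℝ in Ici 0, ∏ j, Complex.exp (-c j * t j) = ∏ j, (c j)⁻¹ := by
  rw [volume_restrict_Ici_pi,
    integral_fintype_prod_eq_prod fun j (u : ℝ) => Complex.exp (-c j * u)]
  exact Finset.prod_congr rfl fun j _ => integral_Ici_zero_cexp_neg_mul (hc j)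

lemma cexp_neg_sub_mul_I_vecMul {ι : Type*} [Fintype ι] {V : Matrix ι ι ℝ} {s : ι → ℂ}
    {φ : (ι → ℝ) → ℂ} {t : ι → ℝ} (hφ : φ (t ᵥ* V) = ∑ j, (t j : ℂ) * s j) (m : ι → ℝ) :
    Complex.exp (-φ (t ᵥ* V) - Complex.I * ((t ᵥ* V ⬝ᵥ m : ℝ) : ℂ))
      = ∏ j, Complex.exp (-(s j + Complex.I * ((V *ᵥ m) j : ℝ)) * t j) := by
  rw [← Complex.exp_sum, hφ, ← dotProduct_mulVec, dotProduct, Complex.ofReal_sum,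
    Finset.mul_sum, ← Finset.sum_neg_distrib, ← Finset.sum_sub_distrib]
  congr 1
  refine Finset.sum_congr rfl fun j _ => ?_
  push_cast
  ring

def simplicialCone {ι : Type*} [Fintype ι] (V : Matrix ι ι ℝ) : Set (ι → ℝ) :=
  (· ᵥ* V) '' Ici 0

section vecMul

variable {ι : Type*} [Fintype ι] [DecidableEq ι] {V : Matrix ι ι ℝ}

lemma measurePreserving_vecMul (hV : |V.det| = 1) : MeasurePreserving (· ᵥ* V) := by
  have hVt : (· ᵥ* V) = toLin' Vᵀ := by ext; simp [mulVec_transpose]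
  refine ⟨by rw [hVt]; exact (toLin' Vᵀ).continuous_of_finiteDimensional.measurable, ?_⟩
  rw [hVt, Real.map_matrix_volume_pi_eq_smul_volume_pi
      (by rw [det_transpose]; exact abs_pos.1 (hV ▸ one_pos)),
    det_transpose, abs_inv, hV, inv_one, ENNReal.ofReal_one, one_smul]

lemma measurableEmbedding_vecMul (hV : V.det ≠ 0) : MeasurableEmbedding (· ᵥ* V) := by
  replace hV : IsUnit V.det := isUnit_iff_ne_zero.2 hV
  have hsurj : Function.Surjective (· ᵥ* V) := fun x =>
    ⟨x ᵥ* V⁻¹, by simp [vecMul_vecMul, nonsing_inv_mul _ hV]⟩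
  exact .of_measurable_inverse (g := (· ᵥ* V⁻¹)) (Continuous.measurable (by fun_prop))
    (by rw [hsurj.range_eq]; exact .univ) (Continuous.measurable (by fun_prop)) fun t => by
      simp [vecMul_vecMul, mul_nonsing_inv _ hV]

lemma integrableOn_image_vecMul_iff {E : Type*} [NormedAddCommGroup E] (hV : |V.det| = 1)
    {f : (ι → ℝ) → E} {s : Set (ι → ℝ)} :
    IntegrableOn f ((· ᵥ* V) '' s) ↔ IntegrableOn (fun t => f (t ᵥ* V)) s :=
  (measurePreserving_vecMul hV).integrableOn_image
    (measurableEmbedding_vecMul (abs_pos.1 (hV ▸ one_pos)))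

lemma setIntegral_image_vecMul {E : Type*} [NormedAddCommGroup E] [NormedSpace ℝ E]
    (hV : |V.det| = 1) (f : (ι → ℝ) → E) (s : Set (ι → ℝ)) :
    ∫ x in (· ᵥ* V) '' s, f x = ∫ t in s, f (t ᵥ* V) :=
  (measurePreserving_vecMul hV).setIntegral_image_emb
    (measurableEmbedding_vecMul (abs_pos.1 (hV ▸ one_pos))) f s

lemma measurableSet_simplicialCone (hV : V.det ≠ 0) : MeasurableSet (simplicialCone V) :=
  (measurableEmbedding_vecMul hV).measurableSet_image.2 measurableSet_Ici

theorem integrableOn_and_setIntegral_simplicialCone_cexp (hV : |V.det| = 1) {s : ι → ℂ}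
    (hs : ∀ j, 0 < (s j).re) {φ : (ι → ℝ) → ℂ}
    (hφ : ∀ t, 0 ≤ t → φ (t ᵥ* V) = ∑ j, (t j : ℂ) * s j) (m : ι → ℝ) :
    IntegrableOn (fun x => Complex.exp (-φ x - Complex.I * ((x ⬝ᵥ m : ℝ) : ℂ)))
        (simplicialCone V) ∧
      ∫ x in simplicialCone V, Complex.exp (-φ x - Complex.I * ((x ⬝ᵥ m : ℝ) : ℂ))
        = ∏ j, (s j + Complex.I * ((V *ᵥ m) j : ℝ))⁻¹ := by
  have hc : ∀ j, 0 < (s j + Complex.I * ((V *ᵥ m) j : ℝ)).re := by simpa using hs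
  have hpt : EqOn (fun t => Complex.exp (-φ (t ᵥ* V) - Complex.I * ((t ᵥ* V ⬝ᵥ m : ℝ) : ℂ)))
      (fun t => ∏ j, Complex.exp (-(s j + Complex.I * ((V *ᵥ m) j : ℝ)) * t j)) (Ici 0) :=
    fun t ht => cexp_neg_sub_mul_I_vecMul (hφ t ht) m
  rw [simplicialCone, integrableOn_image_vecMul_iff hV, setIntegral_image_vecMul hV,
    setIntegral_congr_fun measurableSet_Ici hpt, integral_Ici_zero_prod_cexp_neg_mul hc]
  exact ⟨(integrableOn_Ici_zero_prod_cexp_neg_mul hc).congr_fun hpt.symm measurableSet_Ici, rfl⟩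

end vecMul

lemma integral_eq_sum_setIntegral_of_iUnion_eq_univ {X E ι : Type*} [MeasurableSpace X]
    {μ : Measure X} [NormedAddCommGroup E] [NormedSpace ℝ E] [Fintype ι] {s : ι → Set X}
    {f : X → E} (hs : ∀ i, NullMeasurableSet (s i) μ)
    (hd : Pairwise (Function.onFun (AEDisjoint μ) s)) (hU : ⋃ i, s i = univ)
    (hf : ∀ i, IntegrableOn f (s i) μ) :
    ∫ x, f x ∂μ = ∑ i, ∫ x in s i, f x ∂μ := by
  rw [← setIntegral_univ, ← hU, integral_iUnion_ae hs hd (integrableOn_finite_iUnion.2 hf),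
    tsum_fintype]

section Fan

variable {d N : ℕ} {gen : Fin N → Fin d → (Fin d → ℤ)} {a : Fin N}

def coneMatrix (gen : Fin N → Fin d → (Fin d → ℤ)) (a : Fin N) : Matrix (Fin d) (Fin d) ℝ :=
  (Matrix.of fun j i => gen a j i).map (Int.cast : ℤ → ℝ)

lemma vecMul_coneMatrix (t : Fin d → ℝ) :
    t ᵥ* coneMatrix gen a = ∑ j, t j • fun i => (gen a j i : ℝ) :=
  vecMul_eq_sum t _

lemma maxCone_eq_simplicialCone : maxCone gen a = simplicialCone (coneMatrix gen a) := by
  ext x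
  simp only [maxCone, simplicialCone, vecMul_coneMatrix, mem_image, mem_Ici, Pi.le_def,
    Pi.zero_apply, eq_comm]
  rfl

lemma abs_det_coneMatrix (h : IsUnit (Matrix.of fun j i => gen a j i).det) :
    |(coneMatrix gen a).det| = 1 := by
  rcases Int.isUnit_iff.1 h with h | h <;> simp [coneMatrix, ← Int.cast_det, h]

lemma measurableSet_maxCone (h : IsUnit (Matrix.of fun j i => gen a j i).det) :
    MeasurableSet (maxCone gen a) := by
  rw [maxCone_eq_simplicialCone]
  exact measurableSet_simplicialCone (abs_pos.1 (abs_det_coneMatrix h ▸ one_pos))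

end Fan

theorem fan_fourier_transform_general (d N : ℕ)
    (gen : Fin N → Fin d → (Fin d → ℤ))
    (hbasis : ∀ a, IsUnit (Matrix.det (Matrix.of fun j i => gen a j i)))
    (hcover : (⋃ a, maxCone gen a) = Set.univ)
    (hdisj : ∀ a b, a ≠ b → volume (maxCone gen a ∩ maxCone gen b) = 0)
    (sval : (Fin d → ℤ) → ℂ) (hre : ∀ a j, 0 < (sval (gen a j)).re)
    (φ : (Fin d → ℝ) → ℂ)
    (hφ : ∀ a (t : Fin d → ℝ), (∀ j, 0 ≤ t j) →
      φ (∑ j, t j • fun i => ((gen a j i : ℝ))) = ∑ j, (t j : ℂ) * sval (gen a j))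
    (m : Fin d → ℝ) :
    (∫ x : Fin d → ℝ, Complex.exp (-φ x - Complex.I * ((∑ i, x i * m i : ℝ) : ℂ)))
      = ∑ a, ∏ j, (sval (gen a j) + Complex.I * ((∑ i, (gen a j i : ℝ) * m i : ℝ) : ℂ))⁻¹ := by
  have hcone a := integrableOn_and_setIntegral_simplicialCone_cexp
    (abs_det_coneMatrix (hbasis a)) (hre a)
    (fun t ht => by rw [vecMul_coneMatrix]; exact hφ a t ht) m
  simp only [← maxCone_eq_simplicialCone] at hcone
  exact (integral_eq_sum_setIntegral_of_iUnion_eq_univ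
    (fun a => (measurableSet_maxCone (hbasis a)).nullMeasurableSet)
    (fun a b hab => hdisj a b hab) hcover fun a => (hcone a).1).trans
    (Finset.sum_congr rfl fun a _ => (hcone a).2)

/-- for a complete regular fan `Σ` in `ℝ^d` (each maximal cone generated
by a lattice basis), `s` with `Re(s_j) > 0` on each primitive generator, and any
`m ∈ M_ℝ`, the Fourier transform of `e^{-φ_s}` is
`∫_{N_ℝ} e^{-φ_s(x) - i⟨x,m⟩} dx = Σ_{σ ∈ Σ(d)} ∏_{e_j ∈ σ} (s_j + i⟨e_j,m⟩)⁻¹`. -/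
theorem fan_fourier_transform (d N : ℕ) (hd : 0 < d)
    (gen : Fin N → Fin d → (Fin d → ℤ))
    (hbasis : ∀ a, IsUnit (Matrix.det (Matrix.of fun j i => gen a j i)))
    (hcover : (⋃ a, maxCone gen a) = Set.univ)
    (hdisj : ∀ a b, a ≠ b → volume (maxCone gen a ∩ maxCone gen b) = 0)
    (sval : (Fin d → ℤ) → ℂ) (hre : ∀ a j, 0 < (sval (gen a j)).re)
    (φ : (Fin d → ℝ) → ℂ)
    (hφ : ∀ a (t : Fin d → ℝ), (∀ j, 0 ≤ t j) →
      φ (∑ j, t j • fun i => ((gen a j i : ℝ))) = ∑ j, (t j : ℂ) * sval (gen a j))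
    (m : Fin d → ℝ) :
    (∫ x : Fin d → ℝ, Complex.exp (-φ x - Complex.I * ((∑ i, x i * m i : ℝ) : ℂ)))
      = ∑ a, ∏ j, (sval (gen a j) + Complex.I * ((∑ i, (gen a j i : ℝ) * m i : ℝ) : ℂ))⁻¹ :=
  fan_fourier_transform_general d N gen hbasis hcover hdisj sval hre φ hφ m
end

section
/- Let Σ be a complete regular fan in ℤ^d invariant under a finite group G_v acting on the lattice, with Σ(1) decomposed into G_v-orbits Σ₁(1), …, Σ_l(1) of lengths d₁, …, d_l. Define for each G_v-invariant cone σ with 1-dimensional faces forming orbits Σ_{j₁}(1), …, Σ_{j_k}(1) the rational function R_σ(u) = ∏_{a=1}^{k} u_{j_a}^{d_{j_a}} / (1 − u_{j_a}^{d_{j_a}}), and define Q_Σ by Σ_{σ ∈ Σ^{G_v}} R_σ(u) = Q_Σ(u₁,…,u_l) / ∏_{j=1}^{l} (1 − u_j^{d_j}). Then the polynomial Q_Σ(u₁,…,u_l) − 1 contains only monomials of total degree ≥ 2. -/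
/-! Let `Y_j = u_j ^ d_j`. Modulo the square of the ideal of the variables all products
`Y_i Y_k` vanish, so the summand `∏_{j ∈ J} Y_j ∏_{j ∉ J} (1 - Y_j)` of `Q_Σ` reduces to
`1 - ∑_j Y_j` for `J = ∅`, to `Y_j` for `J = {j}`, and to `0` otherwise. The zero cone is the
only cone with `J = ∅`, and `Y_j` survives only when `d_j = 1`; then the orbit is a single fixed
ray, which spans exactly one invariant cone with `J = {j}`. Hence `Q_Σ ≡ 1` modulo that ideal. -/

open scoped Classical
open Finset

section SquareZero

variable {A ι : Type*} [CommRing A] (y : ι → A)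

theorem prod_one_sub_eq_one_sub_sum (hy : ∀ i k, y i * y k = 0) (s : Finset ι) :
    ∏ i ∈ s, (1 - y i) = 1 - ∑ i ∈ s, y i := by
  induction s using Finset.cons_induction with
  | empty => simp
  | cons a s ha ih =>
    rw [prod_cons, sum_cons, ih, sub_mul, one_mul, mul_sub, mul_one, mul_sum,
      sum_eq_zero fun i _ => hy a i]
    ring

theorem prod_eq_zero_of_one_lt_card (hy : ∀ i k, y i * y k = 0) {J : Finset ι} (hJ : 1 < #J) :
    ∏ i ∈ J, y i = 0 := by
  obtain ⟨a, ha, b, hb, hab⟩ := one_lt_card.1 hJ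
  rw [← mul_prod_erase J y ha, ← mul_prod_erase _ y (mem_erase.2 ⟨hab.symm, hb⟩),
    ← mul_assoc, hy, zero_mul]

variable [Fintype ι] [DecidableEq ι]

theorem prod_mul_prod_sdiff_one_sub (hy : ∀ i k, y i * y k = 0) (J : Finset ι) :
    (∏ i ∈ J, y i) * ∏ i ∈ univ \ J, (1 - y i) =
      (if J = ∅ then 1 - ∑ i, y i else 0) + ∑ j, if J = {j} then y j else 0 := by
  rw [prod_one_sub_eq_one_sub_sum y hy]
  obtain hJ | hJ | hJ : #J = 0 ∨ #J = 1 ∨ 1 < #J := by omega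
  · obtain rfl := card_eq_zero.1 hJ
    simp
  · obtain ⟨a, rfl⟩ := card_eq_one.1 hJ
    simp [mul_sub, mul_sum, hy]
  · have hne : ∀ j, J ≠ {j} := fun j h => by simp [h] at hJ
    have hJ_ne : J ≠ ∅ := by rintro rfl; simp at hJ
    simp [prod_eq_zero_of_one_lt_card y hy hJ, hne, hJ_ne]

theorem sum_prod_mul_prod_sdiff_one_sub_eq_one (hy : ∀ i k, y i * y k = 0) {κ : Type*}
    (F : Finset κ) (J : κ → Finset ι)
    (h_empty : #{k ∈ F | J k = ∅} = 1)
    (h_single : ∀ j, y j ≠ 0 → #{k ∈ F | J k = {j}} = 1) :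
    ∑ k ∈ F, (∏ i ∈ J k, y i) * ∏ i ∈ univ \ J k, (1 - y i) = 1 := by
  have h_count : ∀ j, #{k ∈ F | J k = {j}} • y j = y j := fun j => by
    by_cases hj : y j = 0
    · simp [hj]
    · simp [h_single j hj]
  simp only [prod_mul_prod_sdiff_one_sub y hy, sum_add_distrib]
  rw [sum_comm (s := F)]
  simp only [← sum_filter, sum_const, h_empty, h_count, one_smul, sub_add_cancel]

end SquareZero

namespace MvPolynomial

variable {σ R : Type*} [CommSemiring R]

theorem X_pow_mul_X_pow_mem_sq_idealOfVars (i k : σ) {a b : ℕ} (ha : a ≠ 0) (hb : b ≠ 0) :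
    X i ^ a * X k ^ b ∈ idealOfVars σ R ^ 2 := by
  have hX : ∀ j, X j ∈ idealOfVars σ R := fun j => Ideal.subset_span (Set.mem_range_self j)
  rw [sq]
  exact Ideal.mul_mem_mul (Ideal.pow_mem_of_mem _ (hX i) a (by omega))
    (Ideal.pow_mem_of_mem _ (hX k) b (by omega))

theorem X_pow_mem_sq_idealOfVars (i : σ) {a : ℕ} (ha : 2 ≤ a) :
    X i ^ a ∈ idealOfVars σ R ^ 2 :=
  Ideal.pow_le_pow_right ha (Ideal.pow_mem_pow (Ideal.subset_span (Set.mem_range_self i)) a)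

end MvPolynomial

section Fibres

variable {α β : Type*} (f : α → β) (F : Finset (Finset α))

theorem card_filter_image_eq_empty [DecidableEq β] (h : ∅ ∈ F) :
    #{S ∈ F | S.image f = ∅} = 1 := by
  rw [card_eq_one]
  exact ⟨∅, by ext S; simp [and_iff_right_of_imp (fun h' : S = ∅ => h' ▸ h)]⟩

theorem card_filter_image_eq_singleton [Fintype α] [DecidableEq α] [DecidableEq β]
    {a : α} {b : β} (hfib : ({i | f i = b} : Finset α) = {a}) (ha : {a} ∈ F) :
    #{S ∈ F | S.image f = {b}} = 1 := by
  have hfa : f a = b := by simpa using hfib.ge (mem_singleton_self a)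
  have h_image : ∀ S : Finset α, S.image f = {b} ↔ S = {a} := fun S => by
    refine ⟨fun hS => ?_, fun hS => by rw [hS, image_singleton, hfa]⟩
    have hne : S.Nonempty := by simp [← image_nonempty (f := f), hS]
    refine hne.subset_singleton_iff.1 fun i hi => ?_
    rw [← hfib, mem_filter]
    exact ⟨mem_univ i, mem_singleton.1 (hS ▸ mem_image_of_mem f hi)⟩
  rw [card_eq_one]
  exact ⟨{a}, by ext S; simp [h_image, and_iff_right_of_imp (fun h' : S = {a} => h' ▸ ha)]⟩

theorem apply_eq_self_of_filter_eq_singleton [Fintype α] [DecidableEq β] (p : α → α)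
    (hp : ∀ i, f (p i) = f i) {a : α} {b : β} (hfib : ({i | f i = b} : Finset α) = {a}) :
    p a = a := by
  have hfa : f a = b := by simpa using hfib.ge (mem_singleton_self a)
  have hpa : p a ∈ ({i | f i = b} : Finset α) := by simp [hp, hfa]
  simpa [hfib] using hpa

end Fibres

theorem QSigma_sub_one_degree_ge_two_general (n l : ℕ) (G : Type) [Group G]
    (π : G →* Equiv.Perm (Fin n))
    (orb : Fin n → Fin l) (horb : Function.Surjective orb)
    (horb2 : ∀ i i', orb i = orb i' ↔ ∃ g, π g i = i')
    (Scones : Finset (Finset (Fin n)))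
    (hempty : ∅ ∈ Scones) (hsingle : ∀ i, {i} ∈ Scones)
    (dd : Fin l → ℕ)
    (hdd : ∀ j, dd j = (Finset.univ.filter (fun i => orb i = j)).card) :
    ∀ m : Fin l →₀ ℕ, (m.sum fun _ e => e) ≤ 1 →
      MvPolynomial.coeff m
        ((∑ S ∈ Scones.filter (fun S => ∀ g : G, S.image (π g) = S),
            (∏ j ∈ S.image orb, (MvPolynomial.X j : MvPolynomial (Fin l) ℚ) ^ dd j) *
              ∏ j ∈ Finset.univ \ S.image orb, (1 - MvPolynomial.X j ^ dd j)) - 1)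
        = 0 := by
  intro m hm
  set F := Scones.filter (fun S => ∀ g : G, S.image (π g) = S)
  have hdd_pos : ∀ j, dd j ≠ 0 := fun j => by
    obtain ⟨i, rfl⟩ := horb j
    rw [hdd]
    exact (card_pos.2 ⟨i, by simp⟩).ne'
  have h_single : ∀ j, dd j = 1 → #{S ∈ F | S.image orb = {j}} = 1 := fun j hj => by
    obtain ⟨a, ha⟩ := card_eq_one.1 ((hdd j).symm.trans hj)
    have hfix : ∀ g, π g a = a := fun g =>
      apply_eq_self_of_filter_eq_singleton orb (π g) (fun i => ((horb2 i _).2 ⟨g, rfl⟩).symm) ha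
    exact card_filter_image_eq_singleton orb F ha (mem_filter.2 ⟨hsingle a, by simp [hfix]⟩)
  have hm2 : m.degree < 2 := by rw [Finsupp.degree_apply]; exact Nat.lt_succ_of_le hm
  refine (MvPolynomial.mem_pow_idealOfVars_iff' 2 _).1 ?_ m hm2
  rw [← Ideal.Quotient.eq, map_sum, map_one]
  simp only [map_mul, map_prod, map_sub, map_one]
  refine sum_prod_mul_prod_sdiff_one_sub_eq_one _ (fun i k => ?_) F _
    (card_filter_image_eq_empty orb F (mem_filter.2 ⟨hempty, by simp⟩)) (fun j hj => ?_)
  · rw [← map_mul, Ideal.Quotient.eq_zero_iff_mem]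
    exact MvPolynomial.X_pow_mul_X_pow_mem_sq_idealOfVars i k (hdd_pos i) (hdd_pos k)
  · apply h_single j
    by_contra hj1
    rw [Ne, Ideal.Quotient.eq_zero_iff_mem] at hj
    exact hj (MvPolynomial.X_pow_mem_sq_idealOfVars j (by have := hdd_pos j; omega))

/-- for a complete regular `G_v`-invariant fan `Σ` (encoded by its rays
`rays : Fin n → ℤ^d`, a `G`-action permuting the rays compatibly with a linear action
on the lattice, the decomposition of `Σ(1)` into orbits `orb : Fin n → Fin l` of sizes
`dd j`, and the simplicial cones `Scones`, closed under faces and under the `G`-action),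
the polynomial
`Q_Σ(u) = Σ_{σ ∈ Σ^{G}} ∏_{j ∈ J_σ} u_j^{d_j} · ∏_{j ∉ J_σ} (1 − u_j^{d_j})`
(which satisfies `Σ_σ R_σ = Q_Σ / ∏_j (1 − u_j^{d_j})`) is such that `Q_Σ − 1`
contains only monomials of total degree ≥ 2. -/
theorem QSigma_sub_one_degree_ge_two (d n l : ℕ) (G : Type) [Group G] [Finite G]
    (ρ : G →* ((Fin d → ℤ) ≃ₗ[ℤ] (Fin d → ℤ)))
    (π : G →* Equiv.Perm (Fin n))
    (rays : Fin n → (Fin d → ℤ))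
    (hequiv : ∀ g i, ρ g (rays i) = rays (π g i))
    (orb : Fin n → Fin l) (horb : Function.Surjective orb)
    (horb2 : ∀ i i', orb i = orb i' ↔ ∃ g, π g i = i')
    (Scones : Finset (Finset (Fin n)))
    (hempty : ∅ ∈ Scones) (hsingle : ∀ i, {i} ∈ Scones)
    (hface : ∀ S ∈ Scones, ∀ S' ⊆ S, S' ∈ Scones)
    (hGinv : ∀ S ∈ Scones, ∀ g, S.image (π g) ∈ Scones)
    (hindep : ∀ S ∈ Scones, LinearIndependent ℤ (fun i : ↥S => rays i))
    (hcomplete : (⋃ S ∈ Scones, {x : Fin d → ℝ | ∃ c : Fin n → ℝ, (∀ i, 0 ≤ c i) ∧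
      x = ∑ i ∈ S, c i • fun t => ((rays i t : ℝ))}) = Set.univ)
    (dd : Fin l → ℕ)
    (hdd : ∀ j, dd j = (Finset.univ.filter (fun i => orb i = j)).card) :
    ∀ m : Fin l →₀ ℕ, (m.sum fun _ e => e) ≤ 1 →
      MvPolynomial.coeff m
        ((∑ S ∈ Scones.filter (fun S => ∀ g : G, S.image (π g) = S),
            (∏ j ∈ S.image orb, (MvPolynomial.X j : MvPolynomial (Fin l) ℚ) ^ dd j) *
              ∏ j ∈ Finset.univ \ S.image orb, (1 - MvPolynomial.X j ^ dd j)) - 1)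
        = 0 :=
  QSigma_sub_one_degree_ge_two_general n l G π orb horb horb2 Scones hempty hsingle dd hdd
end
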